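/- If A is a PCWA-core then A is sub-minimal and img-minimal: no proper subinstance of A is PCWA-equivalent to A, and no proper image of A is PCWA-equivalent to A. -/

import Mathlib

/-- An atom (fact): relation name together with a tuple of values. -/
abbrev Atom : Type := ℕ × List ℕ

/-- A (finite) instance: a finite set of atoms. -/
@[ext] structure Inst where
  atoms : Finset Atom
deriving DecidableEq

/-- The active domain of an instance. -/
def adom (A : Inst) : Set ℕ := {x | ∃ a ∈ A.atoms, x ∈ a.2}

/-- The action of a map on values extended to atoms. -/
def mapAtom (h : ℕ → ℕ) (a : Atom) : Atom := (a.1, a.2.map h)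

/-- A homomorphism between instances, fixing the constants `Cst`. -/
structure Hom (Cst : Set ℕ) (A B : Inst) where
  toFun : ℕ → ℕ
  fixes : ∀ c ∈ Cst, toFun c = c
  maps : ∀ a ∈ A.atoms, mapAtom toFun a ∈ B.atoms

/-- Composition of homomorphisms. -/
def Hom.comp {Cst : Set ℕ} {A B C : Inst} (g : Hom Cst B C) (f : Hom Cst A B) :
    Hom Cst A C where
  toFun := g.toFun ∘ f.toFun
  fixes := by intro c hc; simp [f.fixes c hc, g.fixes c hc]
  maps := by
    intro a ha
    have := g.maps _ (f.maps a ha)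
    simpa [mapAtom, List.map_map] using this

/-- A homomorphism is an isomorphism if it has a two-sided inverse on active domains. -/
def IsIso {Cst : Set ℕ} {A B : Inst} (h : Hom Cst A B) : Prop :=
  ∃ g : Hom Cst B A,
    (∀ x ∈ adom A, g.toFun (h.toFun x) = x) ∧ (∀ x ∈ adom B, h.toFun (g.toFun x) = x)

/-- Two instances are isomorphic. -/
def Isomorphic (Cst : Set ℕ) (A B : Inst) : Prop := ∃ h : Hom Cst A B, IsIso h

/-- A set of homomorphisms is a cover if every atom of the codomain is hit. -/
def IsCover {Cst : Set ℕ} {A B : Inst} (H : Set (Hom Cst A B)) : Prop :=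
  ∀ b ∈ B.atoms, ∃ h ∈ H, ∃ a ∈ A.atoms, mapAtom h.toFun a = b

/-- PCWA-equivalence: covers exist in both directions. -/
def PCWAEquiv (Cst : Set ℕ) (A B : Inst) : Prop :=
  (∃ H : Set (Hom Cst A B), IsCover H) ∧ (∃ G : Set (Hom Cst B A), IsCover G)

/-- `A` is a PCWA-core if every self-cover contains an isomorphism. -/
def PCWACore (Cst : Set ℕ) (A : Inst) : Prop :=
  ∀ H : Set (Hom Cst A A), IsCover H → ∃ h ∈ H, IsIso h

/-- `C` is a reflective subinstance of `B` (up to isomorphism):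
an injective homomorphism `m : C → B` with a retraction `q : B → C`. -/
def ReflSub (Cst : Set ℕ) (C B : Inst) : Prop :=
  ∃ m : Hom Cst C B, ∃ q : Hom Cst B C,
    Set.InjOn m.toFun (adom C) ∧ ∀ x ∈ adom C, q.toFun (m.toFun x) = x

/-- `C` is a strict reflective subinstance of `A`: an actual subinstance
together with a retraction that is the identity on `C`'s domain. -/
def StrictReflSub (Cst : Set ℕ) (C A : Inst) : Prop :=
  C.atoms ⊆ A.atoms ∧ ∃ q : Hom Cst A C, ∀ x ∈ adom C, q.toFun x = x

/-- `k` is an endomorphism-maximal atom of `A`. -/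
def MaxAtom (Cst : Set ℕ) (A : Inst) (k : Atom) : Prop :=
  k ∈ A.atoms ∧ ∀ k' ∈ A.atoms, ∀ f : Hom Cst A A, mapAtom f.toFun k' = k →
    ∃ g : Hom Cst A A, mapAtom g.toFun k = k'

/-- `C` is the core of `A` with respect to the atom `k`:
the least strict reflective subinstance of `A` containing `k`. -/
def IsCoreAt (Cst : Set ℕ) (A : Inst) (k : Atom) (C : Inst) : Prop :=
  StrictReflSub Cst C A ∧ k ∈ C.atoms ∧
    ∀ D : Inst, StrictReflSub Cst D A → k ∈ D.atoms → StrictReflSub Cst C D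

/-- The inclusion homomorphism of a subinstance. -/
def inclHom (Cst : Set ℕ) {C A : Inst} (hsub : C.atoms ⊆ A.atoms) : Hom Cst C A where
  toFun := id
  fixes := fun _ _ => rfl
  maps := by intro a ha; simpa [mapAtom] using hsub ha

/-- A strongly surjective homomorphism: every atom of the codomain is the image of an atom. -/
def StrongSurj {Cst : Set ℕ} {A B : Inst} (h : Hom Cst A B) : Prop :=
  ∀ b ∈ B.atoms, ∃ a ∈ A.atoms, mapAtom h.toFun a = b

/-- The image instance of `A` under the value map `f`. -/
def imageInst (f : ℕ → ℕ) (A : Inst) : Inst := ⟨A.atoms.image (mapAtom f)⟩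

/-- The union of a finite family of instances. -/
def unionInst (F : Finset Inst) : Inst := ⟨F.sup Inst.atoms⟩

/-- The members of `F` share no nulls: any value in two distinct members is a constant. -/
def nullsDisjoint (Cst : Set ℕ) (F : Finset Inst) : Prop :=
  ∀ E ∈ F, ∀ E' ∈ F, E ≠ E' → adom E ∩ adom E' ⊆ Cst

/-- `F` is the multicore of `A`: each member is (isomorphic to) a core of `A`
at some maximal atom, every core at a maximal atom is a reflective subinstance
of some member, and no member is a reflective subinstance of another. -/
def IsMulticore (Cst : Set ℕ) (A : Inst) (F : Finset Inst) : Prop :=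
  (∀ E ∈ F, ∃ k C, MaxAtom Cst A k ∧ IsCoreAt Cst A k C ∧ Isomorphic Cst E C) ∧
  (∀ k C, MaxAtom Cst A k → IsCoreAt Cst A k C → ∃ E ∈ F, ReflSub Cst C E) ∧
  (∀ E ∈ F, ∀ E' ∈ F, ReflSub Cst E E' → E = E')

lemma mapAtom_comp (g f : ℕ → ℕ) (a : Atom) :
    mapAtom g (mapAtom f a) = mapAtom (g ∘ f) a := by
  simp [mapAtom]

lemma mapAtom_eq_self {A : Inst} {a : Atom} (ha : a ∈ A.atoms) {g : ℕ → ℕ}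
    (hg : ∀ x ∈ adom A, g x = x) : mapAtom g a = a := by
  have hl : a.2.map g = a.2 := by
    conv_rhs => rw [← List.map_id a.2]
    exact List.map_congr_left (fun x hx => hg x ⟨a, ha, hx⟩)
  cases a; simpa [mapAtom] using hl

/-- A PCWA-core is sub-minimal and img-minimal. -/
theorem pcwa_core_sub_img_minimal (Cst : Set ℕ) (A : Inst)
    (hA : PCWACore Cst A) :
    (∀ B : Inst, B.atoms ⊆ A.atoms → PCWAEquiv Cst B A → B = A) ∧
    (∀ f : ℕ → ℕ, (∀ c ∈ Cst, f c = c) →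
      PCWAEquiv Cst (imageInst f A) A → Isomorphic Cst (imageInst f A) A) := by
  constructor
  · -- sub-minimality
    rintro B hBA ⟨⟨H, hH⟩, ⟨G, hG⟩⟩
    -- the compositions form a self-cover of A
    have hcov : IsCover {k : Hom Cst A A | ∃ h ∈ H, ∃ g ∈ G, k = h.comp g} := by
      intro b hb
      obtain ⟨h, hh, a, haB, hma⟩ := hH b hb
      obtain ⟨g, hg, a', ha'A, hma'⟩ := hG a haB
      exact ⟨h.comp g, ⟨h, hh, g, hg, rfl⟩, a', ha'A, by
        simp only [Hom.comp, ← mapAtom_comp, hma', hma]⟩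
    obtain ⟨k, ⟨h, _, g, _, rfl⟩, j, _, hj2⟩ := hA _ hcov
    -- every atom of A is the h-image of an atom of B
    have hsurj : A.atoms ⊆ B.atoms.image (mapAtom h.toFun) := by
      intro b hb
      refine Finset.mem_image.2 ⟨mapAtom g.toFun (mapAtom j.toFun b),
        g.maps _ (j.maps b hb), ?_⟩
      rw [mapAtom_comp, mapAtom_comp]
      exact mapAtom_eq_self hb (fun x hx => hj2 x hx)
    have hcard : A.atoms.card ≤ B.atoms.card :=
      le_trans (Finset.card_le_card hsurj) (Finset.card_image_le)
    exact Inst.ext (Finset.eq_of_subset_of_card_le hBA hcard)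
  · -- img-minimality
    rintro f hf ⟨⟨H, hH⟩, ⟨G, hG⟩⟩
    have hfmaps : ∀ a ∈ A.atoms, mapAtom f a ∈ (imageInst f A).atoms := fun a ha =>
      Finset.mem_image_of_mem (mapAtom f) ha
    let hfHom : Hom Cst A (imageInst f A) := ⟨f, hf, hfmaps⟩
    have hcov : IsCover {k : Hom Cst A A | ∃ h ∈ H, k = h.comp hfHom} := by
      intro b hb
      obtain ⟨h, hh, a, haB, hma⟩ := hH b hb
      obtain ⟨a', ha'A, rfl⟩ := Finset.mem_image.1 haB
      exact ⟨h.comp hfHom, ⟨h, hh, rfl⟩, a', ha'A, by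
        simp only [Hom.comp, ← mapAtom_comp, hma]
        exact hma⟩
    obtain ⟨k, ⟨h, _, rfl⟩, j, hj1, hj2⟩ := hA _ hcov
    refine ⟨h, hfHom.comp j, ?_, ?_⟩
    · intro x hx
      obtain ⟨b, hbB, hxb⟩ := hx
      obtain ⟨a, haA, rfl⟩ := Finset.mem_image.1 hbB
      obtain ⟨y, hy, rfl⟩ := List.mem_map.1 hxb
      have hyA : y ∈ adom A := ⟨a, haA, hy⟩
      have := hj1 y hyA
      simp only [Hom.comp, Function.comp] at this ⊢
      exact congrArg f this
    · intro x hx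
      have := hj2 x hx
      simp only [Hom.comp, Function.comp] at this ⊢
      exact this
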